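/- arXiv:2602.08881 — 3 statements merged into one kernel-verified Lean document; each statement's English description precedes it below -/
import Mathlib

section
/- Let n : ℝ → ℝ³ be a smooth curve with ‖n(t)‖ = 1 for all t, and let V : ℝ³ → ℝ be continuously differentiable with Euclidean gradient ∇V. Define along n the extrinsic covariant derivatives A₁(t) = n''(t) + ‖n'(t)‖² n(t), A₂(t) = P(n(t)) A₁'(t), and A₃(t) = P(n(t)) A₂'(t), and the sphere curvature term R(A₁, n')n' = ⟨n', n'⟩ A₁ − ⟨A₁, n'⟩ n'. Then n satisfies the intrinsic Euler–Lagrange equation A₃(t) + (⟨n'(t), n'(t)⟩ A₁(t) − ⟨A₁(t), n'(t)⟩ n'(t)) + P(n(t)) ∇V(n(t)) = 0 for all t if and only if it satisfies the explicit fourth-order equation P(n(t)) ( n''''(t) + 2‖n'(t)‖² n''(t) + 4⟨n'(t), n''(t)⟩ n'(t) + ‖n''(t)‖² n(t) + ∇V(n(t)) ) = 0 for all t. -/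
open RealInnerProductSpace

noncomputable abbrev E3 : Type := EuclideanSpace ℝ (Fin 3)

/-- Orthogonal projection onto the tangent plane of `S²` at the unit vector `m`. -/
noncomputable def sphereProj (m x : E3) : E3 := x - ⟪x, m⟫ • m

/-- Proposition 7: a smooth unit-norm curve `n` satisfies the intrinsic
Euler–Lagrange equation
`D_t³ ṅ + R(D_t ṅ, ṅ) ṅ + P(n) ∇V(n) = 0`
if and only if it satisfies the explicit fourth-order equation
`P(n)(n'''' + 2‖n'‖² n'' + 4⟨n', n''⟩ n' + ‖n''‖² n + ∇V(n)) = 0`. -/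
theorem quantum_cubic_explicit_form (n : ℝ → E3) (hn : ContDiff ℝ (⊤ : ℕ∞) n)
    (hunit : ∀ t, ‖n t‖ = 1)
    (V : E3 → ℝ) (hV : ContDiff ℝ 1 V)
    (A₁ A₂ A₃ : ℝ → E3)
    (hA₁ : ∀ t, A₁ t = deriv (deriv n) t + (‖deriv n t‖ ^ 2) • n t)
    (hA₂ : ∀ t, A₂ t = sphereProj (n t) (deriv A₁ t))
    (hA₃ : ∀ t, A₃ t = sphereProj (n t) (deriv A₂ t)) :
    (∀ t, A₃ t
        + (⟪deriv n t, deriv n t⟫ • A₁ t - ⟪A₁ t, deriv n t⟫ • deriv n t)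
        + sphereProj (n t) (gradient V (n t)) = 0)
      ↔
    (∀ t, sphereProj (n t)
        (deriv (deriv (deriv (deriv n))) t
          + (2 * ‖deriv n t‖ ^ 2) • deriv (deriv n) t
          + (4 * ⟪deriv n t, deriv (deriv n) t⟫) • deriv n t
          + (‖deriv (deriv n) t‖ ^ 2) • n t
          + gradient V (n t)) = 0) := by
  have hn0 : ContDiff ℝ ((⊤:ℕ∞):WithTop ℕ∞) n := hn.of_le (by simp)
  have hn1 : ContDiff ℝ ((⊤:ℕ∞):WithTop ℕ∞) (deriv n) :=
    (contDiff_infty_iff_deriv.mp hn0).2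
  have hn2 : ContDiff ℝ ((⊤:ℕ∞):WithTop ℕ∞) (deriv (deriv n)) :=
    (contDiff_infty_iff_deriv.mp hn1).2
  have hn3 : ContDiff ℝ ((⊤:ℕ∞):WithTop ℕ∞) (deriv (deriv (deriv n))) :=
    (contDiff_infty_iff_deriv.mp hn2).2
  have d0 : ∀ t, HasDerivAt n (deriv n t) t := fun t =>
    ((hn0.differentiable (by simp)) t).hasDerivAt
  have d1 : ∀ t, HasDerivAt (deriv n) (deriv (deriv n) t) t := fun t =>
    ((hn1.differentiable (by simp)) t).hasDerivAt
  have d2 : ∀ t, HasDerivAt (deriv (deriv n)) (deriv (deriv (deriv n)) t) t := fun t =>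
    ((hn2.differentiable (by simp)) t).hasDerivAt
  have d3 : ∀ t, HasDerivAt (deriv (deriv (deriv n))) (deriv (deriv (deriv (deriv n))) t) t :=
    fun t => ((hn3.differentiable (by simp)) t).hasDerivAt
  -- scalar identities from unit norm
  have hnn : ∀ t, ⟪n t, n t⟫ = 1 := fun t => by
    rw [real_inner_self_eq_norm_sq, hunit t]; norm_num
  have h1n : ∀ t, ⟪deriv n t, n t⟫ = 0 := by
    intro t
    have hc : HasDerivAt (fun t => ⟪n t, n t⟫) 0 t := by
      have : (fun t => ⟪n t, n t⟫) = fun _ => (1:ℝ) := funext hnn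
      rw [this]; exact hasDerivAt_const t 1
    have h := ((d0 t).inner ℝ (d0 t)).unique hc
    rw [real_inner_comm] at h; linarith
  have hn1' : ∀ t, ⟪n t, deriv n t⟫ = 0 := fun t => by
    rw [real_inner_comm]; exact h1n t
  have h2n : ∀ t, ⟪deriv (deriv n) t, n t⟫ = -⟪deriv n t, deriv n t⟫ := by
    intro t
    have hc : HasDerivAt (fun t => ⟪deriv n t, n t⟫) 0 t := by
      have : (fun t => ⟪deriv n t, n t⟫) = fun _ => (0:ℝ) := funext h1n
      rw [this]; exact hasDerivAt_const t 0
    have h := ((d1 t).inner ℝ (d0 t)).unique hc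
    linarith
  have hn2' : ∀ t, ⟪n t, deriv (deriv n) t⟫ = -⟪deriv n t, deriv n t⟫ := fun t => by
    rw [real_inner_comm]; exact h2n t
  have h3n : ∀ t, ⟪deriv (deriv (deriv n)) t, n t⟫
      = -3 * ⟪deriv n t, deriv (deriv n) t⟫ := by
    intro t
    have hc : HasDerivAt (fun t => ⟪deriv (deriv n) t, n t⟫)
        (-(⟪deriv n t, deriv (deriv n) t⟫ + ⟪deriv (deriv n) t, deriv n t⟫)) t := by
      have : (fun t => ⟪deriv (deriv n) t, n t⟫)
          = fun t => -⟪deriv n t, deriv n t⟫ := funext h2n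
      rw [this]; exact ((d1 t).inner ℝ (d1 t)).neg
    have h := ((d2 t).inner ℝ (d0 t)).unique hc
    linarith [real_inner_comm (deriv n t) (deriv (deriv n) t)]
  -- derivative of A₁
  have A₁fun : A₁ = fun t => deriv (deriv n) t + ⟪deriv n t, deriv n t⟫ • n t :=
    funext fun t => by rw [hA₁ t, real_inner_self_eq_norm_sq]
  have dA1 : ∀ t, HasDerivAt A₁
      (deriv (deriv (deriv n)) t
        + (⟪deriv n t, deriv n t⟫ • deriv n t
          + (⟪deriv n t, deriv (deriv n) t⟫ + ⟪deriv (deriv n) t, deriv n t⟫) • n t)) t := by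
    intro t
    rw [A₁fun]
    exact (d2 t).add (((d1 t).inner ℝ (d1 t)).smul (d0 t))
  -- explicit form of A₂
  have A₂fun : A₂ = fun t => deriv (deriv (deriv n)) t
      + (3 * ⟪deriv n t, deriv (deriv n) t⟫) • n t
      + ⟪deriv n t, deriv n t⟫ • deriv n t := by
    funext t
    rw [hA₂ t, (dA1 t).deriv]
    simp only [sphereProj, inner_add_left, real_inner_smul_left, hnn, h1n, hn1', h2n, h3n,
      real_inner_comm (deriv (deriv n) t) (deriv n t)]
    module
  -- derivative of A₂
  have dA2 : ∀ t, HasDerivAt A₂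
      (deriv (deriv (deriv (deriv n))) t
        + ((3 * ⟪deriv n t, deriv (deriv n) t⟫) • deriv n t
          + (3 * (⟪deriv n t, deriv (deriv (deriv n)) t⟫
              + ⟪deriv (deriv n) t, deriv (deriv n) t⟫)) • n t)
        + (⟪deriv n t, deriv n t⟫ • deriv (deriv n) t
          + (⟪deriv n t, deriv (deriv n) t⟫ + ⟪deriv (deriv n) t, deriv n t⟫) • deriv n t)) t := by
    intro t
    rw [A₂fun]
    exact ((d3 t).add ((((d1 t).inner ℝ (d2 t)).const_mul 3).smul (d0 t))).add
      (((d1 t).inner ℝ (d1 t)).smul (d1 t))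
  -- pointwise identity between the two equations
  have key : ∀ t,
      A₃ t + (⟪deriv n t, deriv n t⟫ • A₁ t - ⟪A₁ t, deriv n t⟫ • deriv n t)
        + sphereProj (n t) (gradient V (n t))
      = sphereProj (n t)
        (deriv (deriv (deriv (deriv n))) t
          + (2 * ‖deriv n t‖ ^ 2) • deriv (deriv n) t
          + (4 * ⟪deriv n t, deriv (deriv n) t⟫) • deriv n t
          + (‖deriv (deriv n) t‖ ^ 2) • n t
          + gradient V (n t)) := by
    intro t
    rw [hA₃ t, (dA2 t).deriv, A₁fun]
    simp only [sphereProj, ← real_inner_self_eq_norm_sq, inner_add_left, real_inner_smul_left,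
      hnn, h1n, hn1', h2n, hn2', h3n,
      real_inner_comm (deriv (deriv n) t) (deriv n t)]
    module
  constructor
  · intro h t; rw [← key t]; exact h t
  · intro h t; rw [key t]; exact h t
end

section
/- Let n : ℝ → ℝ³ be a smooth curve with ‖n(t)‖ = 1 for all t. Let Ṽ : ℝ → ℝ be continuously differentiable and let V : ℝ³ → ℝ be the axially symmetric potential V(x) = Ṽ(⟨x, e_z⟩), where e_z = (0,0,1), with Euclidean gradient ∇V. Assume n satisfies, for all t, the equation P(n(t)) ( n''''(t) + 2‖n'(t)‖² n''(t) + 4⟨n'(t), n''(t)⟩ n'(t) + ‖n''(t)‖² n(t) + ∇V(n(t)) ) = 0. Define the covariant acceleration A(t) = n''(t) + ‖n'(t)‖² n(t) and the second-order axial momentum J_z(t) = ⟨A'(t), e_z × n(t)⟩ − ⟨A(t), e_z × n'(t)⟩, where × denotes the cross product in ℝ³. Then J_z is constant: J_z(t) = J_z(0) for all t. -/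
open RealInnerProductSpace

/-- The cross product on `ℝ³ = EuclideanSpace ℝ (Fin 3)`. -/
noncomputable def crossE (x y : E3) : E3 :=
  (EuclideanSpace.equiv (Fin 3) ℝ).symm
    (crossProduct ((EuclideanSpace.equiv (Fin 3) ℝ) x) ((EuclideanSpace.equiv (Fin 3) ℝ) y))

/-- The unit vector `e_z = (0,0,1)` in `ℝ³`. -/
noncomputable def ez : E3 := EuclideanSpace.single 2 1

lemma inner_crossE (a b c : E3) :
    ⟪a, crossE b c⟫ = a 0 * (b 1 * c 2 - b 2 * c 1) + a 1 * (b 2 * c 0 - b 0 * c 2)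
      + a 2 * (b 0 * c 1 - b 1 * c 0) := by
  simp [crossE, cross_apply, PiLp.inner_apply, Fin.sum_univ_three, RCLike.inner_apply,
    EuclideanSpace.equiv]
  ring

lemma inner_crossE_self_right (b c : E3) : ⟪c, crossE b c⟫ = 0 := by
  rw [inner_crossE]; ring

lemma inner_crossE_self_left (b c : E3) : ⟪b, crossE b c⟫ = 0 := by
  rw [inner_crossE]; ring

lemma inner_crossE_swap (a b c : E3) : ⟪a, crossE b c⟫ = -⟪c, crossE b a⟫ := by
  rw [inner_crossE, inner_crossE]; ring

/-- Cross product with `ez` as a continuous linear map. -/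
noncomputable def Lz : E3 →L[ℝ] E3 :=
  LinearMap.toContinuousLinearMap
    (((EuclideanSpace.equiv (Fin 3) ℝ).symm.toLinearEquiv.toLinearMap).comp
      ((crossProduct ((EuclideanSpace.equiv (Fin 3) ℝ) ez)).comp
        (EuclideanSpace.equiv (Fin 3) ℝ).toLinearEquiv.toLinearMap))

lemma Lz_apply (x : E3) : Lz x = crossE ez x := rfl

lemma gradient_axial (Vtil : ℝ → ℝ) (hVtil : ContDiff ℝ 1 Vtil) (V : E3 → ℝ)
    (hV : ∀ x, V x = Vtil ⟪x, ez⟫) (x : E3) :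
    gradient V x = deriv Vtil ⟪x, ez⟫ • ez := by
  have hfun : V = fun y => Vtil ⟪ez, y⟫ := by
    funext y; rw [hV y, real_inner_comm]
  have hd : HasDerivAt Vtil (deriv Vtil ⟪ez, x⟫) ⟪ez, x⟫ :=
    ((hVtil.differentiable one_ne_zero) _).hasDerivAt
  have h1 : HasFDerivAt (fun y : E3 => Vtil ⟪ez, y⟫)
      (deriv Vtil ⟪ez, x⟫ • (innerSL ℝ ez)) x := by
    have := hd.comp_hasFDerivAt x (innerSL ℝ ez).hasFDerivAt
    exact this
  have h2 : HasGradientAt V (deriv Vtil ⟪ez, x⟫ • ez) x := by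
    rw [hasGradientAt_iff_hasFDerivAt]
    have he : (InnerProductSpace.toDual ℝ E3) (deriv Vtil ⟪ez, x⟫ • ez)
        = deriv Vtil ⟪ez, x⟫ • (innerSL ℝ ez) := by
      ext y
      simp [InnerProductSpace.toDual_apply_apply, real_inner_smul_left]
    rw [hfun, he]
    exact h1
  rw [h2.gradient, real_inner_comm]

set_option maxHeartbeats 1600000 in
/-- Theorem 13 (extrinsic form): for an axially symmetric potential
`V(x) = Vtil(⟨x, e_z⟩)`, the second-order axial momentum
`J_z(t) = ⟨A'(t), e_z × n(t)⟩ − ⟨A(t), e_z × n'(t)⟩`, where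
`A = n'' + ‖n'‖² n` is the covariant acceleration, is conserved along
solutions of the explicit fourth-order Euler–Lagrange equation. -/
theorem axial_momentum_conserved (n : ℝ → E3) (hn : ContDiff ℝ (⊤ : ℕ∞) n)
    (hunit : ∀ t, ‖n t‖ = 1)
    (Vtil : ℝ → ℝ) (hVtil : ContDiff ℝ 1 Vtil)
    (V : E3 → ℝ) (hV : ∀ x, V x = Vtil ⟪x, ez⟫)
    (hEL : ∀ t, sphereProj (n t)
        (deriv (deriv (deriv (deriv n))) t
          + (2 * ‖deriv n t‖ ^ 2) • deriv (deriv n) t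
          + (4 * ⟪deriv n t, deriv (deriv n) t⟫) • deriv n t
          + (‖deriv (deriv n) t‖ ^ 2) • n t
          + gradient V (n t)) = 0)
    (A : ℝ → E3) (hA : ∀ t, A t = deriv (deriv n) t + (‖deriv n t‖ ^ 2) • n t)
    (Jz : ℝ → ℝ)
    (hJz : ∀ t, Jz t = ⟪deriv A t, crossE ez (n t)⟫ - ⟪A t, crossE ez (deriv n t)⟫) :
    ∀ t, Jz t = Jz 0 := by
  set n1 := deriv n with hn1def
  set n2 := deriv n1 with hn2def
  set n3 := deriv n2 with hn3def
  set n4 := deriv n3 with hn4def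
  have h0 : ContDiff ℝ ((⊤ : ℕ∞) : WithTop ℕ∞) n := hn.of_le (by simp)
  have hD0 : Differentiable ℝ n := h0.differentiable (by simp)
  have h1 : ContDiff ℝ ((⊤ : ℕ∞) : WithTop ℕ∞) n1 := (contDiff_infty_iff_deriv.mp h0).2
  have hD1 : Differentiable ℝ n1 := h1.differentiable (by simp)
  have h2 : ContDiff ℝ ((⊤ : ℕ∞) : WithTop ℕ∞) n2 := (contDiff_infty_iff_deriv.mp h1).2
  have hD2 : Differentiable ℝ n2 := h2.differentiable (by simp)
  have h3 : ContDiff ℝ ((⊤ : ℕ∞) : WithTop ℕ∞) n3 := (contDiff_infty_iff_deriv.mp h2).2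
  have hD3 : Differentiable ℝ n3 := h3.differentiable (by simp)
  have Hn : ∀ t, HasDerivAt n (n1 t) t := fun t => (hD0 t).hasDerivAt
  have Hn1 : ∀ t, HasDerivAt n1 (n2 t) t := fun t => (hD1 t).hasDerivAt
  have Hn2 : ∀ t, HasDerivAt n2 (n3 t) t := fun t => (hD2 t).hasDerivAt
  have Hn3 : ∀ t, HasDerivAt n3 (n4 t) t := fun t => (hD3 t).hasDerivAt
  -- derivative of the squared speed
  have Hq : ∀ t, HasDerivAt (fun s => ‖n1 s‖ ^ 2) (2 * ⟪n1 t, n2 t⟫) t := by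
    intro t
    have h := (Hn1 t).inner ℝ (Hn1 t)
    have hfe : (fun s => ⟪n1 s, n1 s⟫) = fun s => ‖n1 s‖ ^ 2 := by
      funext s; exact real_inner_self_eq_norm_sq _
    rw [hfe] at h
    have hv : 2 * ⟪n1 t, n2 t⟫ = ⟪n1 t, n2 t⟫ + ⟪n2 t, n1 t⟫ := by
      rw [real_inner_comm (n2 t) (n1 t)]; ring
    rw [hv]; exact h
  -- the first derivative of A
  set A1 : ℝ → E3 := fun t => n3 t + (‖n1 t‖ ^ 2 • n2 t + (2 * ⟪n1 t, n2 t⟫) • n1 t) with hA1def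
  have hAfun : A = fun t => n2 t + ‖n1 t‖ ^ 2 • n t := funext hA
  have HA : ∀ t, HasDerivAt A (n3 t + (‖n1 t‖ ^ 2 • n1 t + (2 * ⟪n1 t, n2 t⟫) • n t)) t := by
    intro t
    rw [hAfun]
    exact (Hn2 t).add ((Hq t).smul (Hn t))
  have derivA : deriv A = fun t => n3 t + (‖n1 t‖ ^ 2 • n1 t + (2 * ⟪n1 t, n2 t⟫) • n t) :=
    funext fun t => (HA t).deriv
  -- rewrite Jz using Lz
  have hJfun : Jz = fun t =>
      ⟪n3 t + (‖n1 t‖ ^ 2 • n1 t + (2 * ⟪n1 t, n2 t⟫) • n t), Lz (n t)⟫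
        - ⟪A t, Lz (n1 t)⟫ := by
    funext t
    rw [hJz t, derivA, Lz_apply, Lz_apply]
  -- derivative of Jz
  have HJz : ∀ t, HasDerivAt Jz
      ((⟪n3 t + (‖n1 t‖ ^ 2 • n1 t + (2 * ⟪n1 t, n2 t⟫) • n t), Lz (n1 t)⟫
          + ⟪n4 t + ((‖n1 t‖ ^ 2 • n2 t + (2 * ⟪n1 t, n2 t⟫) • n1 t)
              + ((2 * ⟪n1 t, n2 t⟫) • n1 t
                + (2 * (⟪n1 t, n3 t⟫ + ⟪n2 t, n2 t⟫)) • n t)), Lz (n t)⟫)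
        - (⟪A t, Lz (n2 t)⟫
          + ⟪n3 t + (‖n1 t‖ ^ 2 • n1 t + (2 * ⟪n1 t, n2 t⟫) • n t), Lz (n1 t)⟫)) t := by
    intro t
    rw [hJfun]
    have Hr : HasDerivAt (fun s => 2 * ⟪n1 s, n2 s⟫)
        (2 * (⟪n1 t, n3 t⟫ + ⟪n2 t, n2 t⟫)) t :=
      ((Hn1 t).inner ℝ (Hn2 t)).const_mul 2
    have HB : HasDerivAt (fun s => n3 s + (‖n1 s‖ ^ 2 • n1 s + (2 * ⟪n1 s, n2 s⟫) • n s))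
        (n4 t + ((‖n1 t‖ ^ 2 • n2 t + (2 * ⟪n1 t, n2 t⟫) • n1 t)
              + ((2 * ⟪n1 t, n2 t⟫) • n1 t
                + (2 * (⟪n1 t, n3 t⟫ + ⟪n2 t, n2 t⟫)) • n t))) t :=
      (Hn3 t).add (((Hq t).smul (Hn1 t)).add (Hr.smul (Hn t)))
    have HLn : HasDerivAt (fun s => Lz (n s)) (Lz (n1 t)) t :=
      Lz.hasFDerivAt.comp_hasDerivAt t (Hn t)
    have HLn1 : HasDerivAt (fun s => Lz (n1 s)) (Lz (n2 t)) t :=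
      Lz.hasFDerivAt.comp_hasDerivAt t (Hn1 t)
    have HA' : HasDerivAt A (n3 t + (‖n1 t‖ ^ 2 • n1 t + (2 * ⟪n1 t, n2 t⟫) • n t)) t := HA t
    exact (HB.inner ℝ HLn).sub (HA'.inner ℝ HLn1)
  -- the derivative vanishes
  have hzero : ∀ t, deriv Jz t = 0 := by
    intro t
    rw [(HJz t).deriv]
    -- shorthand
    set w := Lz (n t) with hw
    have hwn : ⟪n t, w⟫ = 0 := by rw [hw, Lz_apply]; exact inner_crossE_self_right _ _
    have hezw : ⟪ez, w⟫ = 0 := by rw [hw, Lz_apply]; exact inner_crossE_self_left _ _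
    have hn2n2 : ⟪n2 t, Lz (n2 t)⟫ = 0 := by
      rw [Lz_apply]; exact inner_crossE_self_right _ _
    have hswap : ⟪n t, Lz (n2 t)⟫ = -⟪n2 t, w⟫ := by
      rw [hw, Lz_apply, Lz_apply]; exact inner_crossE_swap _ _ _
    -- Euler-Lagrange equation paired with w
    have hELw : ⟪n4 t, w⟫ + 2 * ‖n1 t‖ ^ 2 * ⟪n2 t, w⟫
        + 4 * ⟪n1 t, n2 t⟫ * ⟪n1 t, w⟫ = 0 := by
      have h := hEL t
      rw [sphereProj, sub_eq_zero] at h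
      have hX : ⟪n4 t + (2 * ‖n1 t‖ ^ 2) • n2 t + (4 * ⟪n1 t, n2 t⟫) • n1 t
          + (‖n2 t‖ ^ 2) • n t + gradient V (n t), w⟫
          = ⟪n4 t + (2 * ‖n1 t‖ ^ 2) • n2 t + (4 * ⟪n1 t, n2 t⟫) • n1 t
          + (‖n2 t‖ ^ 2) • n t + gradient V (n t), n t⟫ * ⟪n t, w⟫ := by
        conv_lhs => rw [h]
        rw [real_inner_smul_left]
      rw [hwn, mul_zero] at hX
      have hgrad : ⟪gradient V (n t), w⟫ = 0 := by
        rw [gradient_axial Vtil hVtil V hV, real_inner_smul_left, hezw, mul_zero]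
      simp only [inner_add_left, real_inner_smul_left, hwn, hgrad, mul_zero, add_zero] at hX
      linarith
    have hA_w : ⟪A t, Lz (n2 t)⟫ = ‖n1 t‖ ^ 2 * (-⟪n2 t, w⟫) := by
      rw [hA t, inner_add_left, real_inner_smul_left, hn2n2, hswap, zero_add]
    simp only [inner_add_left, real_inner_smul_left, hwn, hA_w]
    ring_nf
    nlinarith [hELw]
  have hdiff : Differentiable ℝ Jz := fun t => (HJz t).differentiableAt
  intro t
  exact is_const_of_deriv_eq_zero hdiff hzero t 0
end

section
/- Let E be a real normed vector space, N ∈ ℕ with N ≥ 4, and let L_d : E × E × E → ℝ be continuously (Fréchet) differentiable, with partial differentials D₁L_d, D₂L_d, D₃L_d with respect to its three arguments. Define the discrete action S_d : E^{N+1} → ℝ by S_d(g₀, …, g_N) = ∑_{k=1}^{N−1} L_d(g_{k−1}, g_k, g_{k+1}). Then a tuple (g₀, …, g_N) is a critical point of S_d with respect to variations fixing g₀, g₁, g_{N−1}, g_N — i.e., for every (δ₀, …, δ_N) ∈ E^{N+1} with δ₀ = δ₁ = δ_{N−1} = δ_N = 0, the derivative of ε ↦ S_d(g₀ + εδ₀,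 …, g_N + εδ_N) at ε = 0 vanishes — if and only if for every k with 2 ≤ k ≤ N−2 the discrete second-order Euler–Lagrange equations hold: D₂L_d(g_{k−1}, g_k, g_{k+1}) + D₃L_d(g_{k−2}, g_{k−1}, g_k) + D₁L_d(g_k, g_{k+1}, g_{k+2}) = 0 (as elements of the dual space E*). -/
/-!
Differentiating under the finite sum, the first variation of the action in the direction `δ` is
`∑ₖ dL_d(g_{k-1}, g_k, g_{k+1})(δ_{k-1}, δ_k, δ_{k+1})`. Splitting each total differential
into its three partial differentials and shifting the index of the first and third families so
that every term acts on `δ_k` (discrete integration by parts), the terms at the four fixed points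
drop out and the first variation becomes `∑_{k=2}^{N-2} DEL2_k(δ_k)`. This vanishes for every
admissible `δ` iff every `DEL2_k` vanishes, as one sees by testing against `δ` concentrated at a
single `k`.
-/

open Finset ContinuousLinearMap

section PartialDerivatives

variable {𝕜 : Type*} [NontriviallyNormedField 𝕜] {E F G H : Type*}
  [NormedAddCommGroup E] [NormedSpace 𝕜 E] [NormedAddCommGroup F] [NormedSpace 𝕜 F]
  [NormedAddCommGroup G] [NormedSpace 𝕜 G] [NormedAddCommGroup H] [NormedSpace 𝕜 H]

theorem fderiv_apply_prod_eq_add {f : E × F → G} {a : E} {b : F}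
    (hf : DifferentiableAt 𝕜 f (a, b)) (u : E) (v : F) :
    fderiv 𝕜 f (a, b) (u, v)
      = fderiv 𝕜 (fun x => f (x, b)) a u + fderiv 𝕜 (fun y => f (a, y)) b v := by
  have h_fst : HasFDerivAt (fun x => f (x, b)) ((fderiv 𝕜 f (a, b)).comp (inl 𝕜 E F)) a :=
    hf.hasFDerivAt.comp a (hasFDerivAt_prodMk_left a b)
  have h_snd : HasFDerivAt (fun y => f (a, y)) ((fderiv 𝕜 f (a, b)).comp (inr 𝕜 E F)) b :=
    hf.hasFDerivAt.comp b (hasFDerivAt_prodMk_right a b)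
  rw [h_fst.fderiv, h_snd.fderiv, comp_apply, comp_apply, ← map_add,
    inl_apply, inr_apply, Prod.mk_add_mk, add_zero, zero_add]

theorem fderiv_apply_prod_prod_eq_add {f : E × F × G → H} {a : E} {b : F} {c : G}
    (hf : DifferentiableAt 𝕜 f (a, b, c)) (u : E) (v : F) (w : G) :
    fderiv 𝕜 f (a, b, c) (u, v, w)
      = fderiv 𝕜 (fun x => f (x, b, c)) a u + fderiv 𝕜 (fun y => f (a, y, c)) b v
          + fderiv 𝕜 (fun z => f (a, b, z)) c w := by
  have hf_a : DifferentiableAt 𝕜 (fun q : F × G => f (a, q)) (b, c) :=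
    hf.comp (b, c) ((differentiableAt_const a).prodMk differentiableAt_id)
  rw [fderiv_apply_prod_eq_add hf, fderiv_apply_prod_eq_add hf_a, add_assoc]

end PartialDerivatives

section BoundaryTrimming

variable {M : Type*} [AddCommMonoid M] {N : ℕ}

theorem sum_Icc_one_eq_sum_Icc_two {f : ℕ → M} (h1 : f 1 = 0) (hN : f (N - 1) = 0) :
    ∑ k ∈ Icc 1 (N - 1), f k = ∑ k ∈ Icc 2 (N - 2), f k := by
  refine (sum_subset (Icc_subset_Icc (by omega) (by omega)) fun k hk hk' => ?_).symm
  obtain rfl | rfl : k = 1 ∨ k = N - 1 := by simp only [mem_Icc] at hk hk'; omega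
  exacts [h1, hN]

theorem sum_Icc_one_eq_sum_Icc_two_of_shift_right {F f : ℕ → M} (hF : ∀ k, F (k + 1) = f k)
    (h0 : f 0 = 0) (h1 : f 1 = 0) :
    ∑ k ∈ Icc 1 (N - 1), F k = ∑ k ∈ Icc 2 (N - 2), f k :=
  calc ∑ k ∈ Icc 1 (N - 1), F k = ∑ k ∈ Icc 3 (N - 1), F k := by
        refine (sum_subset (Icc_subset_Icc (by omega) le_rfl) fun k hk hk' => ?_).symm
        obtain rfl | rfl : k = 1 ∨ k = 2 := by simp only [mem_Icc] at hk hk'; omega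
        exacts [(hF 0).trans h0, (hF 1).trans h1]
    _ = ∑ k ∈ Icc 2 (N - 2), f k :=
        sum_nbij' (· - 1) (· + 1) (by intro k hk; simp only [mem_Icc] at hk ⊢; omega)
          (by intro k hk; simp only [mem_Icc] at hk ⊢; omega)
          (by intro k hk; simp only [mem_Icc] at hk; omega) (by simp)
          (by intro k hk; simp only [mem_Icc] at hk; rw [← hF, Nat.sub_add_cancel (by omega)])

theorem sum_Icc_one_eq_sum_Icc_two_of_shift_left {F f : ℕ → M} (hF : ∀ k, F k = f (k + 1))
    (hN1 : f (N - 1) = 0) (hN : f N = 0) :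
    ∑ k ∈ Icc 1 (N - 1), F k = ∑ k ∈ Icc 2 (N - 2), f k :=
  calc ∑ k ∈ Icc 1 (N - 1), F k = ∑ k ∈ Icc 1 (N - 3), F k := by
        refine (sum_subset (Icc_subset_Icc le_rfl (by omega)) fun k hk hk' => ?_).symm
        obtain h | h : k + 1 = N - 1 ∨ k + 1 = N := by simp only [mem_Icc] at hk hk'; omega
        exacts [(hF k).trans (h ▸ hN1), (hF k).trans (h ▸ hN)]
    _ = ∑ k ∈ Icc 2 (N - 2), f k :=
        sum_nbij' (· + 1) (· - 1) (by intro k hk; simp only [mem_Icc] at hk ⊢; omega)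
          (by intro k hk; simp only [mem_Icc] at hk ⊢; omega) (by simp)
          (by intro k hk; simp only [mem_Icc] at hk; omega) (fun k _ => hF k)

end BoundaryTrimming

noncomputable section DiscreteMechanics

variable {𝕜 : Type*} [NontriviallyNormedField 𝕜] {E F : Type*}
  [NormedAddCommGroup E] [NormedSpace 𝕜 E] [NormedAddCommGroup F] [NormedSpace 𝕜 F]
  (Ld : E × E × E → F)

def discreteAction (N : ℕ) (g : ℕ → E) : F :=
  ∑ k ∈ Icc 1 (N - 1), Ld (g (k - 1), g k, g (k + 1))

variable (𝕜) in
def discreteEulerLagrange (g : ℕ → E) (k : ℕ) : E →L[𝕜] F :=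
  fderiv 𝕜 (fun y => Ld (g (k - 1), y, g (k + 1))) (g k)
    + fderiv 𝕜 (fun y => Ld (g (k - 2), g (k - 1), y)) (g k)
    + fderiv 𝕜 (fun y => Ld (y, g (k + 1), g (k + 2))) (g k)

variable {Ld}

theorem hasLineDerivAt_discreteAction (hLd : Differentiable 𝕜 Ld) (N : ℕ) (g δ : ℕ → E) :
    HasLineDerivAt 𝕜 (discreteAction Ld N)
      (∑ k ∈ Icc 1 (N - 1),
        fderiv 𝕜 Ld (g (k - 1), g k, g (k + 1)) (δ (k - 1), δ k, δ (k + 1)))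
      g δ :=
  HasDerivAt.fun_sum fun k _ =>
    (hLd (g (k - 1), g k, g (k + 1))).hasFDerivAt.hasLineDerivAt (δ (k - 1), δ k, δ (k + 1))

theorem lineDeriv_discreteAction (hLd : Differentiable 𝕜 Ld) {N : ℕ} {g δ : ℕ → E}
    (h0 : δ 0 = 0) (h1 : δ 1 = 0) (hN1 : δ (N - 1) = 0) (hN : δ N = 0) :
    lineDeriv 𝕜 (discreteAction Ld N) g δ
      = ∑ k ∈ Icc 2 (N - 2), discreteEulerLagrange 𝕜 Ld g k (δ k) := by
  rw [(hasLineDerivAt_discreteAction hLd N g δ).lineDeriv]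
  simp only [fderiv_apply_prod_prod_eq_add (hLd _), sum_add_distrib, discreteEulerLagrange,
    add_apply]
  conv_rhs => rw [← add_rotate]
  congr 1
  · congr 1
    · exact sum_Icc_one_eq_sum_Icc_two_of_shift_right (fun k => by simp) (by simp [h0])
        (by simp [h1])
    · exact sum_Icc_one_eq_sum_Icc_two (by simp [h1]) (by simp [hN1])
  · exact sum_Icc_one_eq_sum_Icc_two_of_shift_left
      (fun k => by rw [show k + 1 - 2 = k - 1 by omega, Nat.add_sub_cancel]) (by simp [hN1])
      (by simp [hN])

end DiscreteMechanics

theorem discrete_second_order_euler_lagrange_general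
    {E : Type*} [NormedAddCommGroup E] [NormedSpace ℝ E]
    (N : ℕ)
    (Ld : E × E × E → ℝ) (hLd : ContDiff ℝ 1 Ld)
    (g : ℕ → E) :
    (∀ δ : ℕ → E, δ 0 = 0 → δ 1 = 0 → δ (N - 1) = 0 → δ N = 0 →
        deriv (fun ε : ℝ =>
          ∑ k ∈ Finset.Icc 1 (N - 1),
            Ld (g (k - 1) + ε • δ (k - 1), g k + ε • δ k,
                g (k + 1) + ε • δ (k + 1))) 0 = 0)
      ↔
    (∀ k : ℕ, 2 ≤ k → k ≤ N - 2 →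
        fderiv ℝ (fun y : E => Ld (g (k - 1), y, g (k + 1))) (g k)
          + fderiv ℝ (fun y : E => Ld (g (k - 2), g (k - 1), y)) (g k)
          + fderiv ℝ (fun y : E => Ld (y, g (k + 1), g (k + 2))) (g k)
          = 0) := by
  have hD : Differentiable ℝ Ld := hLd.differentiable one_ne_zero
  show (∀ δ : ℕ → E, δ 0 = 0 → δ 1 = 0 → δ (N - 1) = 0 → δ N = 0 →
      lineDeriv ℝ (discreteAction Ld N) g δ = 0) ↔
    ∀ k, 2 ≤ k → k ≤ N - 2 → discreteEulerLagrange ℝ Ld g k = 0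
  constructor
  · intro hcrit k hk2 hkN
    ext v
    have hδ (j : ℕ) (hj : j ≠ k) : Pi.single (M := fun _ => E) k v j = 0 :=
      Pi.single_eq_of_ne (M := fun _ => E) hj v
    have h0 := hδ 0 (by omega)
    have h1 := hδ 1 (by omega)
    have hN1 := hδ (N - 1) (by omega)
    have hN := hδ N (by omega)
    have hvar := hcrit _ h0 h1 hN1 hN
    rwa [lineDeriv_discreteAction hD h0 h1 hN1 hN, sum_eq_single_of_mem k (mem_Icc.2 ⟨hk2, hkN⟩)
      (fun j _ hj => by rw [Pi.single_eq_of_ne hj, map_zero]), Pi.single_eq_same] at hvar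
  · intro hEL δ h0 h1 hN1 hN
    rw [lineDeriv_discreteAction hD h0 h1 hN1 hN]
    exact sum_eq_zero fun k hk => by
      rw [hEL k (mem_Icc.1 hk).1 (mem_Icc.1 hk).2, zero_apply]

/-- Characterization of critical points of the discrete action of a
second-order discrete Lagrangian by the discrete second-order Euler–Lagrange
equations (equation DEL2), in the linear-space setting where variations are
straight-line perturbations fixing the two initial and the two final points. -/
theorem discrete_second_order_euler_lagrange
    {E : Type*} [NormedAddCommGroup E] [NormedSpace ℝ E]
    (N : ℕ) (hN : 4 ≤ N)
    (Ld : E × E × E → ℝ) (hLd : ContDiff ℝ 1 Ld)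
    (g : ℕ → E) :
    (∀ δ : ℕ → E, δ 0 = 0 → δ 1 = 0 → δ (N - 1) = 0 → δ N = 0 →
        deriv (fun ε : ℝ =>
          ∑ k ∈ Finset.Icc 1 (N - 1),
            Ld (g (k - 1) + ε • δ (k - 1), g k + ε • δ k,
                g (k + 1) + ε • δ (k + 1))) 0 = 0)
      ↔
    (∀ k : ℕ, 2 ≤ k → k ≤ N - 2 →
        fderiv ℝ (fun y : E => Ld (g (k - 1), y, g (k + 1))) (g k)
          + fderiv ℝ (fun y : E => Ld (g (k - 2), g (k - 1), y)) (g k)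
          + fderiv ℝ (fun y : E => Ld (y, g (k + 1), g (k + 2))) (g k)
          = 0) :=
  discrete_second_order_euler_lagrange_general N Ld hLd g
end
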